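/- arXiv:2506.00760 — 2 statements merged into one kernel-verified Lean document; each statement's English description precedes it below -/
import Mathlib

section
/- Let Y be a preconnected topological space and M : Y → GL(n, ℂ) a continuous map such that M(y) has finite order for every y ∈ Y. If M(y₀) = 1 for some y₀ ∈ Y, then M(y) = 1 for every y ∈ Y. -/
open Matrix Polynomial

/-- The set of (all) roots of unity in `ℂ` is countable. -/
lemma aux_countable_rootsOfUnity :
    {z : ℂ | ∃ k : ℕ, 0 < k ∧ z ^ k = 1}.Countable := by
  have hsub : {z : ℂ | ∃ k : ℕ, 0 < k ∧ z ^ k = 1} ⊆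
      ⋃ k : ℕ, {z : ℂ | z ^ (k + 1) = 1} := by
    rintro z ⟨k, hk, hz⟩
    exact Set.mem_iUnion.2 ⟨k - 1, by simpa [Nat.sub_add_cancel hk] using hz⟩
  refine Set.Countable.mono hsub (Set.countable_iUnion fun k => ?_)
  have hne : (X ^ (k + 1) - C (1 : ℂ)) ≠ 0 :=
    Polynomial.X_pow_sub_C_ne_zero (Nat.succ_pos k) 1
  refine ((Polynomial.finite_setOf_isRoot hne).subset ?_).countable
  intro z hz
  simp only [Set.mem_setOf_eq] at hz ⊢
  simp [Polynomial.IsRoot, hz]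

/-- A continuous ℂ-valued function with countable range on a preconnected space
is constant. -/
lemma aux_const_of_countable_range {Y : Type*} [TopologicalSpace Y]
    [PreconnectedSpace Y] {f : Y → ℂ} (hf : Continuous f)
    (hc : (Set.range f).Countable) (a b : Y) : f a = f b := by
  by_contra h
  set g : Y → ℝ := fun y => ‖f y - f b‖ with hg
  have hgc : Continuous g := (hf.sub continuous_const).norm
  have h0 : g b = 0 := by simp [hg]
  have ha : 0 < g a := by
    simp only [hg, norm_pos_iff]
    exact sub_ne_zero.2 h
  have hsub : Set.Icc (0 : ℝ) (g a) ⊆ Set.range g := by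
    have := intermediate_value_univ b a hgc
    rwa [h0] at this
  have hcr : (Set.range g).Countable := by
    have : Set.range g = (fun z => ‖z - f b‖) '' Set.range f := by
      rw [← Set.range_comp]; rfl
    rw [this]; exact hc.image _
  have hIcc : (Set.Icc (0 : ℝ) (g a)).Countable := hcr.mono hsub
  have hcard := Cardinal.mk_Icc_real ha
  have := hIcc.le_aleph0
  rw [hcard] at this
  exact absurd this (not_le.2 Cardinal.aleph0_lt_continuum)

/-- A complex number of norm one with real part one is `1`. -/
lemma aux_eq_one_of_re_eq_one {z : ℂ} (hz : ‖z‖ = 1) (hre : z.re = 1) :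
    z = 1 := by
  have h1 : Complex.normSq z = 1 := by
    rw [Complex.normSq_eq_norm_sq, hz, one_pow]
  have h2 : z.re ^ 2 + z.im ^ 2 = 1 := by
    rw [← h1, Complex.normSq_apply]; ring
  have him : z.im = 0 := by nlinarith [sq_nonneg z.im]
  exact Complex.ext (by simpa using hre) (by simpa using him)

/-- If a multiset of norm-one complex numbers sums to its cardinality,
all its elements are `1`. -/
lemma aux_multiset_all_one :
    ∀ s : Multiset ℂ, (∀ z ∈ s, ‖z‖ = 1) →
      s.sum = (Multiset.card s : ℂ) → ∀ z ∈ s, z = 1 := by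
  intro s
  induction s using Multiset.induction with
  | empty => simp
  | cons z t ih =>
    intro h1 hsum
    have h1' : ∀ w ∈ t, ‖w‖ = 1 := fun w hw => h1 w (Multiset.mem_cons_of_mem hw)
    have hz1 : ‖z‖ = 1 := h1 z (Multiset.mem_cons_self z t)
    have hsum' : z + t.sum = (Multiset.card t : ℂ) + 1 := by
      have h := hsum
      rw [Multiset.sum_cons, Multiset.card_cons] at h
      push_cast at h
      linear_combination h
    have hresum : (t.sum).re = (t.map Complex.re).sum := by
      have := map_multiset_sum Complex.reAddGroupHom t
      simpa using this
    have hre_bound : (t.map Complex.re).sum ≤ (Multiset.card t : ℝ) := by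
      have h := Multiset.sum_le_card_nsmul (t.map Complex.re) 1 ?_
      · simpa using h
      · intro x hx
        obtain ⟨w, hw, rfl⟩ := Multiset.mem_map.1 hx
        calc w.re ≤ ‖w‖ := Complex.re_le_norm w
          _ = 1 := h1' w hw
    have hre : z.re + (t.sum).re = (Multiset.card t : ℝ) + 1 := by
      have h := congrArg Complex.re hsum'
      simpa using h
    have hzre : z.re = 1 := by
      have hle : z.re ≤ 1 := (Complex.re_le_norm z).trans_eq hz1
      rw [hresum] at hre
      linarith
    have hz : z = 1 := aux_eq_one_of_re_eq_one hz1 hzre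
    have htsum : t.sum = (Multiset.card t : ℂ) := by
      rw [hz] at hsum'
      linear_combination hsum'
    intro w hw
    rcases Multiset.mem_cons.1 hw with rfl | hw'
    · exact hz
    · exact ih h1' htsum w hw'

/-- Roots of the characteristic polynomial of a finite-order matrix are
roots of unity. -/
lemma aux_pow_eq_one_of_root_charpoly {n k : ℕ} (A : Matrix (Fin n) (Fin n) ℂ)
    (hk : A ^ k = 1) {μ : ℂ} (hμ : A.charpoly.IsRoot μ) : μ ^ k = 1 := by
  have hdet : (μ • (1 : Matrix (Fin n) (Fin n) ℂ) - A).det = 0 := by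
    have hmap : (charmatrix A).map (Polynomial.evalRingHom μ) =
        μ • (1 : Matrix (Fin n) (Fin n) ℂ) - A := by
      ext i j
      by_cases hij : i = j
      · subst hij
        simp [charmatrix_apply_eq, Matrix.one_apply]
      · simp [charmatrix_apply_ne _ _ _ hij, Matrix.one_apply, hij]
    have heval : A.charpoly.eval μ =
        ((charmatrix A).map (Polynomial.evalRingHom μ)).det := by
      rw [Matrix.charpoly]
      rw [show Polynomial.eval μ (charmatrix A).det =
        (Polynomial.evalRingHom μ) (charmatrix A).det from rfl,
        RingHom.map_det, RingHom.mapMatrix_apply]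
    rw [hmap] at heval
    rw [← heval]
    exact hμ
  obtain ⟨v, hv, hAv⟩ := (Matrix.exists_mulVec_eq_zero_iff).2 hdet
  have hA : A.mulVec v = μ • v := by
    rw [Matrix.sub_mulVec, Matrix.smul_mulVec, Matrix.one_mulVec] at hAv
    exact (sub_eq_zero.1 hAv).symm
  have hpow : ∀ m : ℕ, (A ^ m).mulVec v = μ ^ m • v := by
    intro m
    induction m with
    | zero => simp [Matrix.one_mulVec]
    | succ m ih =>
      rw [pow_succ, ← Matrix.mulVec_mulVec, hA, Matrix.mulVec_smul, ih,
        smul_smul, ← pow_succ']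
  have hfinal := hpow k
  rw [hk, Matrix.one_mulVec] at hfinal
  obtain ⟨i, hi⟩ := Function.ne_iff.1 hv
  have hvi : μ ^ k * v i = 1 * v i := by
    have := congrFun hfinal i
    simp only [Pi.smul_apply, smul_eq_mul] at this
    rw [← this, one_mul]
  exact mul_right_cancel₀ hi hvi

/-- A matrix of finite order whose characteristic polynomial is `(X - 1) ^ n`
is the identity. -/
lemma aux_eq_one_of_charpoly {n k : ℕ} (hn : 0 < n)
    (A : Matrix (Fin n) (Fin n) ℂ) (hk : A ^ k = 1) (hkpos : 0 < k)
    (hcp : A.charpoly = (X - 1 : ℂ[X]) ^ n) : A = 1 := by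
  haveI : Nonempty (Fin n) := ⟨⟨0, hn⟩⟩
  haveI : Nontrivial (Matrix (Fin n) (Fin n) ℂ) := by
    refine ⟨1, 0, fun h => ?_⟩
    have := congrFun (congrFun h ⟨0, hn⟩) ⟨0, hn⟩
    simp [Matrix.one_apply] at this
  have hint : IsIntegral ℂ A := Matrix.isIntegral A
  set p := minpoly ℂ A with hp
  have hdvd1 : p ∣ (X - 1 : ℂ[X]) ^ n := by
    rw [← hcp]; exact A.minpoly_dvd_charpoly
  have hdvd2 : p ∣ (X ^ k - C (1 : ℂ)) := by
    apply minpoly.dvd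
    rw [map_sub, map_pow, aeval_X, aeval_C]
    simp [hk]
  have hsep : (X ^ k - C (1 : ℂ)).Separable :=
    Polynomial.separable_X_pow_sub_C 1 (by exact_mod_cast hkpos.ne') one_ne_zero
  have hsqf : Squarefree (X ^ k - C (1 : ℂ)) := hsep.squarefree
  have hpsq : Squarefree p := hsqf.squarefree_of_dvd hdvd2
  have hprime : Prime (X - 1 : ℂ[X]) := by
    have := Polynomial.prime_X_sub_C (1 : ℂ)
    simpa using this
  obtain ⟨m, hm, hassoc⟩ := (dvd_prime_pow hprime n).1 hdvd1
  have hmonic : p.Monic := minpoly.monic hint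
  have hXmonic : ((X : ℂ[X]) - 1).Monic := by
    simpa using Polynomial.monic_X_sub_C (1 : ℂ)
  have hpeq : p = (X - 1 : ℂ[X]) ^ m :=
    Polynomial.eq_of_monic_of_associated hmonic (hXmonic.pow m) hassoc
  have hm1 : m = 1 := by
    rcases m with - | m
    · exfalso
      have hdeg : 0 < p.natDegree := minpoly.natDegree_pos hint
      rw [hpeq, pow_zero] at hdeg
      simp at hdeg
    rcases m with - | m
    · rfl
    · exfalso
      apply hprime.not_unit
      apply hpsq (X - 1 : ℂ[X])
      rw [hpeq]
      calc (X - 1 : ℂ[X]) * (X - 1) = (X - 1) ^ 2 := by ring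
        _ ∣ (X - 1) ^ (m + 1 + 1) := pow_dvd_pow _ (by omega)
  have haev : Polynomial.aeval A p = 0 := minpoly.aeval ℂ A
  rw [hpeq, hm1, pow_one, map_sub, aeval_X, Polynomial.aeval_one] at haev
  exact sub_eq_zero.1 haev

/-- If `M : Y → GL(n, ℂ)` is continuous on a preconnected space, each `M y`
has finite order, and `M y₀ = 1` for some point, then `M ≡ 1`. -/
theorem eq_one_of_finite_order_of_eq_one_somewhere {Y : Type*}
    [TopologicalSpace Y] [PreconnectedSpace Y] (n : ℕ) (M : Y → GL (Fin n) ℂ)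
    (hcont : Continuous fun y => ((M y : GL (Fin n) ℂ) : Matrix (Fin n) (Fin n) ℂ))
    (hfin : ∀ y, IsOfFinOrder (M y))
    (y₀ : Y) (h₀ : M y₀ = 1) :
    ∀ y : Y, M y = 1 := by
  rcases Nat.eq_zero_or_pos n with hn0 | hn
  · intro y
    apply Units.ext
    haveI : Subsingleton (Matrix (Fin n) (Fin n) ℂ) := by
      subst hn0
      exact ⟨fun a b => by ext i j; exact i.elim0⟩
    exact Subsingleton.elim _ _
  -- notation
  set f : Y → ℂ :=
    fun y => Matrix.trace ((M y : GL (Fin n) ℂ) : Matrix (Fin n) (Fin n) ℂ) with hf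
  have hfc : Continuous f := hcont.matrix_trace
  set U : Set ℂ := {z : ℂ | ∃ k : ℕ, 0 < k ∧ z ^ k = 1} with hU
  -- basic facts for each point
  have hAk : ∀ y : Y, ∃ k : ℕ, 0 < k ∧
      ((M y : GL (Fin n) ℂ) : Matrix (Fin n) (Fin n) ℂ) ^ k = 1 := by
    intro y
    obtain ⟨k, hk, hpow⟩ := isOfFinOrder_iff_pow_eq_one.1 (hfin y)
    refine ⟨k, hk, ?_⟩
    have := congrArg Units.val hpow
    rwa [Units.val_pow_eq_pow_val, Units.val_one] at this
  have hcard : ∀ y : Y,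
      Multiset.card (Matrix.charpoly
        ((M y : GL (Fin n) ℂ) : Matrix (Fin n) (Fin n) ℂ)).roots = n := by
    intro y
    set A := ((M y : GL (Fin n) ℂ) : Matrix (Fin n) (Fin n) ℂ)
    have hsplit : A.charpoly.Splits := IsAlgClosed.splits A.charpoly
    have := (Polynomial.splits_iff_card_roots).1 hsplit
    rwa [Matrix.charpoly_natDegree_eq_dim, Fintype.card_fin] at this
  have hmemU : ∀ y : Y, ∀ z ∈ (Matrix.charpoly
      ((M y : GL (Fin n) ℂ) : Matrix (Fin n) (Fin n) ℂ)).roots, z ∈ U := by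
    intro y z hz
    obtain ⟨k, hk, hA⟩ := hAk y
    exact ⟨k, hk, aux_pow_eq_one_of_root_charpoly _ hA
      (Polynomial.isRoot_of_mem_roots hz)⟩
  have htr : ∀ y : Y, f y = (Matrix.charpoly
      ((M y : GL (Fin n) ℂ) : Matrix (Fin n) (Fin n) ℂ)).roots.sum := by
    intro y
    exact Matrix.trace_eq_sum_roots_charpoly _
  -- countability of the range of f
  have hrange : (Set.range f).Countable := by
    have hsubset : Set.range f ⊆
        (fun g : Fin n → ℂ => ∑ i, g i) '' {g : Fin n → ℂ | ∀ i, g i ∈ U} := by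
      rintro - ⟨y, rfl⟩
      set r := (Matrix.charpoly
        ((M y : GL (Fin n) ℂ) : Matrix (Fin n) (Fin n) ℂ)).roots with hr
      set l := r.toList with hl
      have hlen : l.length = n := by
        rw [hl, Multiset.length_toList]
        exact hcard y
      refine ⟨fun i => l.get (Fin.cast hlen.symm i), ?_, ?_⟩
      · intro i
        apply hmemU y
        exact Multiset.mem_toList.1 (List.get_mem l (Fin.cast hlen.symm i))
      · have hsum : ∑ i : Fin n, l.get (Fin.cast hlen.symm i) = l.sum := by
          rw [← Fin.sum_univ_getElem]
          exact Fintype.sum_equiv (finCongr hlen.symm) _ _ (fun i => rfl)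
        show (∑ i : Fin n, l.get (Fin.cast hlen.symm i)) = f y
        rw [hsum, htr y, ← Multiset.sum_toList]
    exact Set.Countable.mono hsubset
      ((Set.countable_pi fun _ => aux_countable_rootsOfUnity).image _)
  -- f is constant, equal to n
  have hfy₀ : f y₀ = (n : ℂ) := by
    rw [hf]
    simp only [h₀, Units.val_one, Matrix.trace_one]
    simp
  intro y
  have hfy : f y = (n : ℂ) := by
    rw [aux_const_of_countable_range hfc hrange y y₀, hfy₀]
  -- all roots are 1
  set A := ((M y : GL (Fin n) ℂ) : Matrix (Fin n) (Fin n) ℂ) with hA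
  have hall : ∀ z ∈ A.charpoly.roots, z = 1 := by
    apply aux_multiset_all_one
    · intro z hz
      obtain ⟨k, hk, hzk⟩ := hmemU y z hz
      exact Complex.norm_eq_one_of_pow_eq_one hzk hk.ne'
    · rw [← htr y, hfy, hcard y]
  -- charpoly is (X - 1) ^ n
  have hcp : A.charpoly = (X - 1 : ℂ[X]) ^ n := by
    have hsplit : A.charpoly.Splits := IsAlgClosed.splits A.charpoly
    rw [hsplit.eq_prod_roots_of_monic A.charpoly_monic]
    have hrep : A.charpoly.roots.map (fun a => X - C a) =
        Multiset.replicate n ((X : ℂ[X]) - C 1) := by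
      apply Multiset.eq_replicate.2
      constructor
      · rw [Multiset.card_map]; exact hcard y
      · intro b hb
        obtain ⟨a, ha, rfl⟩ := Multiset.mem_map.1 hb
        rw [hall a ha]
    rw [hrep, Multiset.prod_replicate]
    simp
  obtain ⟨k, hk, hAkk⟩ := hAk y
  have hA1 : A = 1 := aux_eq_one_of_charpoly hn A hAkk hk hcp
  exact Units.ext (by rw [← hA, hA1, Units.val_one])
end

section
/- Let G be a group, Y a preconnected topological space, and ρ : G → Map(Y, GL(n, ℂ)) a group homomorphism into the group of continuous maps Y → GL(n, ℂ) (with pointwise multiplication). For each y ∈ Y let ρ_y : G → GL(n, ℂ) be the evaluation at y. Assume ρ_y(G) is a finite group for every y ∈ Y. Then for every y ∈ Y the evaluation map ρ(G) → ρ_y(G) is a group isomorphism; in particular ρ(G) is a finite group. -/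
open Matrix

open Polynomial

lemma aux_subsingleton_of_countable {s : Set ℝ} (h : IsPreconnected s) (hc : s.Countable) :
    s.Subsingleton := by
  intro a ha b hb
  by_contra hne
  wlog hab : a < b generalizing a b
  · exact this hb ha (Ne.symm hne) (lt_of_le_of_ne (not_lt.mp hab) (Ne.symm hne))
  have hIcc : Set.Icc a b ⊆ s := h.ordConnected.out ha hb
  have : (Set.Icc a b).Countable := hc.mono hIcc
  have hcard : (Cardinal.mk (Set.Icc a b)) ≤ Cardinal.aleph0 := this.le_aleph0
  rw [Cardinal.mk_Icc_real hab] at hcard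
  exact absurd hcard (not_le.mpr Cardinal.aleph0_lt_continuum)

lemma aux_const_of_countable {Y : Type*} [TopologicalSpace Y] [PreconnectedSpace Y]
    {t : Y → ℂ} (hc : Continuous t) {S : Set ℂ} (hS : S.Countable) (hr : ∀ y, t y ∈ S)
    (y₁ y₂ : Y) : t y₁ = t y₂ := by
  have hreal : ∀ u : Y → ℝ, Continuous u → (Set.range u).Countable → u y₁ = u y₂ := by
    intro u hu hcnt
    have := aux_subsingleton_of_countable (isPreconnected_range hu) hcnt
    exact this (Set.mem_range_self y₁) (Set.mem_range_self y₂)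
  have hre : (fun y => (t y).re) y₁ = (fun y => (t y).re) y₂ := by
    refine hreal _ (Complex.continuous_re.comp hc) ((hS.image Complex.re).mono ?_)
    rintro x ⟨y, rfl⟩; exact ⟨t y, hr y, rfl⟩
  have him : (fun y => (t y).im) y₁ = (fun y => (t y).im) y₂ := by
    refine hreal _ (Complex.continuous_im.comp hc) ((hS.image Complex.im).mono ?_)
    rintro x ⟨y, rfl⟩; exact ⟨t y, hr y, rfl⟩
  exact Complex.ext hre him

lemma aux_eval_charpoly {n : ℕ} (M : Matrix (Fin n) (Fin n) ℂ) (μ : ℂ) :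
    M.charpoly.eval μ = (Matrix.diagonal (fun _ => μ) - M).det := by
  rw [Matrix.charpoly, ← Polynomial.coe_evalRingHom, RingHom.map_det]
  congr 1
  ext i j
  by_cases h : i = j
  · subst h; simp [Matrix.charmatrix_apply]
  · simp [Matrix.charmatrix_apply, Matrix.diagonal_apply_ne _ h]

lemma aux_root_pow {n m : ℕ} {M : Matrix (Fin n) (Fin n) ℂ}
    (hM : M ^ m = 1) {μ : ℂ} (hμ : μ ∈ M.charpoly.roots) : μ ^ m = 1 := by
  have hroot : M.charpoly.IsRoot μ := isRoot_of_mem_roots hμ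
  have hdet : (Matrix.diagonal (fun _ : Fin n => μ) - M).det = 0 := by
    rw [← aux_eval_charpoly]; exact hroot
  obtain ⟨v, hv0, hv⟩ := (Matrix.exists_mulVec_eq_zero_iff).mpr hdet
  have hMv : M *ᵥ v = μ • v := by
    have := sub_mulVec (Matrix.diagonal (fun _ : Fin n => μ)) M v
    rw [hv] at this
    have h2 : Matrix.diagonal (fun _ : Fin n => μ) *ᵥ v = μ • v := by
      ext i; simp [Matrix.mulVec_diagonal]
    rw [h2] at this
    rw [eq_comm, sub_eq_zero] at this
    exact this.symm
  have hpow : ∀ k : ℕ, (M ^ k) *ᵥ v = (μ ^ k) • v := by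
    intro k
    induction k with
    | zero => simp
    | succ k ih =>
      rw [pow_succ', pow_succ', ← Matrix.mulVec_mulVec, ih, Matrix.mulVec_smul, hMv,
        smul_smul, mul_comm]
  have := hpow m
  rw [hM, Matrix.one_mulVec] at this
  obtain ⟨i, hi⟩ := Function.ne_iff.mp hv0
  have hvi : v i = μ ^ m * v i := congrFun this i
  have h3 : (μ ^ m - 1) * v i = 0 := by linear_combination -hvi
  rcases mul_eq_zero.mp h3 with h | h
  · exact sub_eq_zero.mp h
  · exact absurd h hi

lemma aux_multiset_eq_one {s : Multiset ℝ} (h : ∀ x ∈ s, x ≤ 1)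
    (hs : s.sum = Multiset.card s) : ∀ x ∈ s, x = 1 := by
  induction s using Multiset.induction with
  | empty => simp
  | cons a t ih =>
    have hts : t.sum ≤ (Multiset.card t : ℝ) := by
      have := Multiset.sum_le_card_nsmul t 1 (fun x hx => h x (Multiset.mem_cons_of_mem hx))
      simpa using this
    have ha : a ≤ 1 := h a (Multiset.mem_cons_self a t)
    have hsum : a + t.sum = 1 + Multiset.card t := by
      rw [Multiset.sum_cons] at hs
      rw [hs]
      push_cast [Multiset.card_cons]
      ring
    have ha1 : a = 1 := by linarith
    have ht : t.sum = Multiset.card t := by linarith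
    intro x hx
    rcases Multiset.mem_cons.mp hx with rfl | hx
    · exact ha1
    · exact ih (fun y hy => h y (Multiset.mem_cons_of_mem hy)) ht x hx

lemma aux_matrix_eq_one {n m : ℕ} (hm : 0 < m) {M : Matrix (Fin n) (Fin n) ℂ}
    (hM : M ^ m = 1) (htr : M.trace = n) : M = 1 := by
  rcases Nat.eq_zero_or_pos n with rfl | hn
  · exact Subsingleton.elim M 1
  set R := M.charpoly.roots with hR
  have hsplits : M.charpoly.Splits := IsAlgClosed.splits _
  have hcard : Multiset.card R = n := by
    rw [hR, (Polynomial.splits_iff_card_roots).mp hsplits, Matrix.charpoly_natDegree_eq_dim,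
      Fintype.card_fin]
  have hsum : R.sum = (n : ℂ) := by
    rw [← Matrix.trace_eq_sum_roots_charpoly, htr]
  have habs : ∀ μ ∈ R, ‖μ‖ = 1 := by
    intro μ hμ
    have h1 : μ ^ m = 1 := aux_root_pow hM hμ
    have h2 : ‖μ‖ ^ m = 1 := by rw [← norm_pow, h1]; simp
    have hx0 : 0 ≤ ‖μ‖ := norm_nonneg μ
    rcases lt_trichotomy (‖μ‖) 1 with h | h | h
    · exact absurd h2 (ne_of_lt (pow_lt_one₀ hx0 h hm.ne'))
    · exact h
    · exact absurd h2 (ne_of_gt (one_lt_pow₀ h hm.ne'))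
  -- real parts
  have hre1 : ∀ μ ∈ R, μ.re = 1 := by
    have hle : ∀ x ∈ R.map Complex.re, x ≤ 1 := by
      intro x hx
      obtain ⟨μ, hμ, rfl⟩ := Multiset.mem_map.mp hx
      calc μ.re ≤ ‖μ‖ := Complex.re_le_norm μ
        _ = 1 := habs μ hμ
    have hsumre : (R.map Complex.re).sum = Multiset.card (R.map Complex.re) := by
      rw [Multiset.card_map, hcard]
      have h : (R.map Complex.re).sum = (Complex.reAddGroupHom R.sum : ℝ) := by
        rw [map_multiset_sum Complex.reAddGroupHom R]; rfl
      rw [h, hsum]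
      simp
    intro μ hμ
    exact aux_multiset_eq_one hle hsumre μ.re (Multiset.mem_map_of_mem _ hμ)
  have hone : ∀ μ ∈ R, μ = 1 := by
    intro μ hμ
    have h1 : μ.re = 1 := hre1 μ hμ
    have h2 : ‖μ‖ = 1 := habs μ hμ
    have h3 : μ.re ^ 2 + μ.im ^ 2 = 1 := by
      have h4 := Complex.sq_norm μ
      rw [h2, Complex.normSq_apply] at h4
      nlinarith [h4]
    have him : μ.im = 0 := by nlinarith
    exact Complex.ext h1 him
  have hrep : R = Multiset.replicate n (1 : ℂ) := Multiset.eq_replicate.mpr ⟨hcard, hone⟩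
  have hch : M.charpoly = (X - C 1) ^ n := by
    have h := hsplits.eq_prod_roots_of_monic M.charpoly_monic
    rw [h, ← hR, hrep, Multiset.map_replicate, Multiset.prod_replicate]
  have hnil : (M - 1) ^ n = 0 := by
    have h := Matrix.aeval_self_charpoly M
    rw [hch] at h
    simpa using h
  have hp1 : minpoly ℂ M ∣ (X - C 1) ^ n := by
    apply minpoly.dvd
    rw [map_pow, map_sub, aeval_X, aeval_C]
    simpa using hnil
  have hp2 : minpoly ℂ M ∣ X ^ m - C 1 := by
    apply minpoly.dvd
    rw [map_sub, map_pow, aeval_X, aeval_C, hM]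
    simp
  have hsep : (X ^ m - C (1:ℂ)).Separable :=
    Polynomial.separable_X_pow_sub_C (1:ℂ) (by exact_mod_cast hm.ne') one_ne_zero
  have hpsq : Squarefree (minpoly ℂ M) := Squarefree.squarefree_of_dvd hp2 hsep.squarefree
  have hdvd : minpoly ℂ M ∣ (X - C 1) := (hpsq.dvd_pow_iff_dvd hn.ne').mp hp1
  have haev : (Polynomial.aeval M) (X - C (1:ℂ)) = 0 := by
    obtain ⟨c, hc⟩ := hdvd
    rw [hc, _root_.map_mul, minpoly.aeval, zero_mul]
  rw [map_sub, aeval_X, aeval_C] at haev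
  have h5 : M - 1 = 0 := by simpa using haev
  rw [sub_eq_zero] at h5
  exact h5

lemma aux_trace_algebraic {n m : ℕ} (hm : 0 < m) {M : Matrix (Fin n) (Fin n) ℂ}
    (hM : M ^ m = 1) : IsAlgebraic ℚ M.trace := by
  rw [Matrix.trace_eq_sum_roots_charpoly]
  have hmem : M.charpoly.roots.sum ∈ integralClosure ℚ ℂ := by
    apply Subalgebra.multiset_sum_mem
    intro μ hμ
    have h1 : μ ^ m = 1 := aux_root_pow hM hμ
    refine ⟨X ^ m - C (1:ℚ), monic_X_pow_sub_C _ hm.ne', ?_⟩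
    simp [h1]
  exact hmem.isAlgebraic

/-- Lemma 3.1: for a homomorphism `ρ` from a group `G` into the group of
continuous maps from a preconnected space `Y` to `GL(n, ℂ)` (with pointwise
multiplication), if each evaluation `ρ_y` has finite image, then evaluation
at any `y` is a bijection from `ρ(G)` onto `ρ_y(G)`; in particular `ρ(G)` is
finite. -/
theorem image_finite_of_pointwise_finite {G : Type*} [Group G] {Y : Type*}
    [TopologicalSpace Y] [PreconnectedSpace Y] (n : ℕ)
    (ρ : G →* C(Y, GL (Fin n) ℂ))
    (hfin : ∀ y : Y, (Set.range fun g => (ρ g) y).Finite) :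
    (∀ y : Y, Set.BijOn (fun f : C(Y, GL (Fin n) ℂ) => f y)
        (Set.range ρ) (Set.range fun g => (ρ g) y)) ∧
      (Set.range ρ).Finite := by
  -- every value of ρ has finite order pointwise
  have horder : ∀ (g : G) (y : Y), ∃ m : ℕ, 0 < m ∧ ((ρ g) y) ^ m = 1 := by
    intro g y
    have hmem : ∀ k : ℕ, ((ρ g) y) ^ k ∈ Set.range fun g' => (ρ g') y := by
      intro k
      refine ⟨g ^ k, ?_⟩
      show (ρ (g ^ k)) y = _
      rw [_root_.map_pow]
      rfl
    have hninj : ¬ Function.Injective (fun k : ℕ => ((ρ g) y) ^ k) := by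
      intro hinj
      exact (hfin y).not_infinite (Set.infinite_of_injective_forall_mem hinj hmem)
    obtain ⟨i, j, hij, hne⟩ := Function.not_injective_iff.mp hninj
    wlog hlt : i < j generalizing i j
    · exact this j i hij.symm (Ne.symm hne) (lt_of_le_of_ne (not_lt.mp hlt) (Ne.symm hne))
    refine ⟨j - i, Nat.sub_pos_of_lt hlt, ?_⟩
    have h1 : ((ρ g) y) ^ (j - i) * ((ρ g) y) ^ i = ((ρ g) y) ^ j := by
      rw [← pow_add, Nat.sub_add_cancel hlt.le]
    have h2 : ((ρ g) y) ^ (j - i) * ((ρ g) y) ^ i = 1 * ((ρ g) y) ^ i := by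
      rw [h1, ← hij, one_mul]
    exact mul_right_cancel h2
  -- key: if ρ g is 1 at one point, it is 1 everywhere
  have key : ∀ (g : G) (y₀ : Y), (ρ g) y₀ = 1 → ρ g = 1 := by
    intro g y₀ hg
    have hmat : ∀ y : Y, ∃ m : ℕ, 0 < m ∧
        ((((ρ g) y) : GL (Fin n) ℂ) : Matrix (Fin n) (Fin n) ℂ) ^ m = 1 := by
      intro y
      obtain ⟨m, hm, hpow⟩ := horder g y
      refine ⟨m, hm, ?_⟩
      have := congrArg (Units.val) hpow
      rwa [Units.val_pow_eq_pow_val, Units.val_one] at this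
    set t : Y → ℂ := fun y =>
      Matrix.trace ((((ρ g) y) : GL (Fin n) ℂ) : Matrix (Fin n) (Fin n) ℂ) with ht
    have htcont : Continuous t :=
      Continuous.matrix_trace (Units.continuous_val.comp (ρ g).continuous)
    have halg : ∀ y, t y ∈ {x : ℂ | IsAlgebraic ℚ x} := by
      intro y
      obtain ⟨m, hm, hpow⟩ := hmat y
      exact aux_trace_algebraic hm hpow
    have hconst : ∀ y, t y = t y₀ :=
      fun y => aux_const_of_countable htcont (Algebraic.countable ℚ ℂ) halg y y₀
    have hty₀ : t y₀ = (n : ℂ) := by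
      rw [ht]
      simp only [hg]
      rw [Units.val_one, Matrix.trace_one]
      simp
    ext y : 1
    apply Units.ext
    show ((((ρ g) y) : GL (Fin n) ℂ) : Matrix (Fin n) (Fin n) ℂ) = _
    obtain ⟨m, hm, hpow⟩ := hmat y
    have htr : Matrix.trace ((((ρ g) y) : GL (Fin n) ℂ) : Matrix (Fin n) (Fin n) ℂ) = (n : ℂ) := by
      rw [show Matrix.trace _ = t y from rfl, hconst y, hty₀]
    have := aux_matrix_eq_one hm hpow htr
    simpa using this
  have hbij : ∀ y : Y, Set.BijOn (fun f : C(Y, GL (Fin n) ℂ) => f y)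
      (Set.range ρ) (Set.range fun g => (ρ g) y) := by
    intro y
    refine ⟨?_, ?_, ?_⟩
    · rintro f ⟨g, rfl⟩
      exact ⟨g, rfl⟩
    · rintro f ⟨g, rfl⟩ f' ⟨g', rfl⟩ h
      have h1 : (ρ (g * g'⁻¹)) y = 1 := by
        rw [_root_.map_mul, map_inv]
        show (ρ g) y * ((ρ g')⁻¹) y = 1
        rw [ContinuousMap.inv_apply]
        rw [show (ρ g) y = (ρ g') y from h]
        exact mul_inv_cancel _
      have h2 := key _ y h1
      rw [_root_.map_mul, map_inv] at h2
      rwa [mul_inv_eq_one] at h2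
    · rintro x ⟨g, rfl⟩
      exact ⟨ρ g, ⟨g, rfl⟩, rfl⟩
  refine ⟨hbij, ?_⟩
  rcases isEmpty_or_nonempty Y with hY | ⟨⟨y⟩⟩
  · have : (Set.range ρ).Subsingleton := by
      intro f _ f' _
      ext y
      exact isEmptyElim y
    exact this.finite
  · exact Set.Finite.of_finite_image (((hfin y).subset (hbij y).mapsTo.image_subset))
      (hbij y).injOn
end
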